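/- Let u and v be viscosity supersolutions of H(x, Du) = 0 in Γ. Then w := min{u, v} is a viscosity supersolution of H(x, Du) = 0 in Γ. -/
import Mathlib


open Set Filter MeasureTheory

/-- A finite topological network embedded in `ℝ^N`, in the sense of Schieborn–Camilli:
finitely many pairwise distinct vertices `V i`, and finitely many differentiable,
non-self-intersecting parametrized curves `π j : [0, l j] → ℝ^N` (the edges), whose
endpoints are vertices, such that each closed edge contains exactly two vertices,
two different closed edges meet in at most one point which is a vertex, and the
network is connected.  A nonempty set `IB` of boundary vertices is fixed, containing
every vertex incident to exactly one edge. -/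
structure TopNetwork (N : ℕ) (I J : Type) [Fintype I] [Fintype J] where
  /-- the vertices -/
  V : I → EuclideanSpace ℝ (Fin N)
  V_inj : Function.Injective V
  /-- the lengths of the parametrizing intervals -/
  l : J → ℝ
  l_pos : ∀ j, 0 < l j
  /-- the parametrizations of the edges -/
  π : J → ℝ → EuclideanSpace ℝ (Fin N)
  π_diff : ∀ j, ∀ t ∈ Set.Icc 0 (l j), DifferentiableWithinAt ℝ (π j) (Set.Icc 0 (l j)) t
  π_inj : ∀ j, Set.InjOn (π j) (Set.Icc 0 (l j))
  start_mem : ∀ j, ∃ i, π j 0 = V i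
  end_mem : ∀ j, ∃ i, π j (l j) = V i
  edge_two_vertices : ∀ j, (π j '' Set.Icc 0 (l j) ∩ Set.range V).ncard = 2
  edges_cap_sub : ∀ j k, j ≠ k →
    π j '' Set.Icc 0 (l j) ∩ π k '' Set.Icc 0 (l k) ⊆ Set.range V
  edges_cap_card : ∀ j k, j ≠ k →
    (π j '' Set.Icc 0 (l j) ∩ π k '' Set.Icc 0 (l k)).ncard ≤ 1
  connected : ∀ i i' : I, ∃ (n : ℕ) (f : ℕ → J),
    V i ∈ π (f 0) '' Set.Icc 0 (l (f 0)) ∧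
    V i' ∈ π (f n) '' Set.Icc 0 (l (f n)) ∧
    ∀ m < n, (π (f m) '' Set.Icc 0 (l (f m)) ∩ π (f (m+1)) '' Set.Icc 0 (l (f (m+1)))).Nonempty
  /-- the indices of the boundary vertices -/
  IB : Set I
  IB_nonempty : IB.Nonempty
  deg_one_bdry : ∀ i, {j | π j 0 = V i ∨ π j (l j) = V i}.ncard = 1 → i ∈ IB

namespace TopNetwork

variable {N : ℕ} {I J : Type} [Fintype I] [Fintype J] (G : TopNetwork N I J)

/-- the closed edge `ē_j` -/
def edgeC (j : J) : Set (EuclideanSpace ℝ (Fin N)) := G.π j '' Set.Icc 0 (G.l j)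

/-- the open edge `e_j` -/
def edgeO (j : J) : Set (EuclideanSpace ℝ (Fin N)) := G.π j '' Set.Ioo 0 (G.l j)

/-- the whole network `Γ̄` -/
def Gbar : Set (EuclideanSpace ℝ (Fin N)) := ⋃ j, G.edgeC j

/-- the set `∂Γ` of boundary vertices -/
def bdry : Set (EuclideanSpace ℝ (Fin N)) := {x | ∃ i ∈ G.IB, x = G.V i}

/-- the set `Γ = Γ̄ \ ∂Γ` -/
def Gam : Set (EuclideanSpace ℝ (Fin N)) := G.Gbar \ G.bdry

/-- the indices of the transition vertices -/
def IT : Set I := G.IBᶜ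

/-- the set of edges incident to the vertex `v_i` -/
def Inc (i : I) : Set J := {j | G.π j 0 = G.V i ∨ G.π j (G.l j) = G.V i}

open Classical in
/-- the signed incidence coefficient `a_{ij}` -/
noncomputable def a (i : I) (j : J) : ℝ :=
  if G.π j 0 = G.V i then 1 else if G.π j (G.l j) = G.V i then -1 else 0

open Classical in
/-- the parameter `π_j⁻¹(v_i)` of the vertex `v_i` on an incident edge `j` -/
noncomputable def vt (i : I) (j : J) : ℝ := if G.π j 0 = G.V i then 0 else G.l j

/-- `φ` has derivative `p` along the edge `j` (in the chart `π j`) at the parameter `t`;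
at an endpoint of `[0, l j]` this is the one-sided derivative. -/
def HasEdgeDerivAt (φ : EuclideanSpace ℝ (Fin N) → ℝ) (j : J) (t p : ℝ) : Prop :=
  HasDerivWithinAt (fun s => φ (G.π j s)) p (Set.Icc 0 (G.l j)) t

/-- a Hamiltonian of eikonal type on the network -/
structure IsEikonalHamiltonian (H : J → ℝ → ℝ → ℝ) : Prop where
  cont : ∀ j, ContinuousOn (fun q : ℝ × ℝ => H j q.1 q.2)
    (Set.Icc 0 (G.l j) ×ˢ (Set.univ : Set ℝ))
  cvx : ∀ j, ∀ t ∈ Set.Icc 0 (G.l j), ConvexOn ℝ Set.univ (H j t)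
  coercive : ∀ j, ∀ t ∈ Set.Icc 0 (G.l j),
    Filter.Tendsto (H j t) (Filter.cocompact ℝ) Filter.atTop
  vertexCompat : ∀ i : I, ∀ j ∈ G.Inc i, ∀ k ∈ G.Inc i, ∀ p : ℝ,
    H j (G.vt i j) p = H k (G.vt i k) p
  vertexSymm : ∀ i : I, ∀ j ∈ G.Inc i, ∀ p : ℝ, H j (G.vt i j) p = H j (G.vt i j) (-p)

/-- viscosity subsolution of `H(x, Du) = f(x)` on `Ω ⊆ Γ` -/
def IsSubSolOn (H : J → ℝ → ℝ → ℝ) (f u : EuclideanSpace ℝ (Fin N) → ℝ)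
    (Ω : Set (EuclideanSpace ℝ (Fin N))) : Prop :=
  UpperSemicontinuousOn u G.Gbar ∧
  (∀ j : J, ∀ t ∈ Set.Ioo 0 (G.l j), G.π j t ∈ Ω →
    ∀ φ : EuclideanSpace ℝ (Fin N) → ℝ, ContinuousOn φ G.Gam →
    ∀ p : ℝ, G.HasEdgeDerivAt φ j t p →
    IsLocalMaxOn (fun y => u y - φ y) G.Gam (G.π j t) →
    H j t p ≤ f (G.π j t)) ∧
  (∀ i ∈ G.IT, G.V i ∈ Ω →
    ∀ j ∈ G.Inc i, ∀ k ∈ G.Inc i, j ≠ k →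
    ∀ φ : EuclideanSpace ℝ (Fin N) → ℝ, ContinuousOn φ G.Gam →
    ∀ pj pk : ℝ, G.HasEdgeDerivAt φ j (G.vt i j) pj → G.HasEdgeDerivAt φ k (G.vt i k) pk →
    G.a i j * pj + G.a i k * pk = 0 →
    IsLocalMaxOn (fun y => u y - φ y) G.Gam (G.V i) →
    H j (G.vt i j) pj ≤ f (G.V i))

/-- viscosity supersolution of `H(x, Du) = f(x)` on `Ω ⊆ Γ` -/
def IsSuperSolOn (H : J → ℝ → ℝ → ℝ) (f u : EuclideanSpace ℝ (Fin N) → ℝ)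
    (Ω : Set (EuclideanSpace ℝ (Fin N))) : Prop :=
  LowerSemicontinuousOn u G.Gbar ∧
  (∀ j : J, ∀ t ∈ Set.Ioo 0 (G.l j), G.π j t ∈ Ω →
    ∀ φ : EuclideanSpace ℝ (Fin N) → ℝ, ContinuousOn φ G.Gam →
    ∀ p : ℝ, G.HasEdgeDerivAt φ j t p →
    IsLocalMinOn (fun y => u y - φ y) G.Gam (G.π j t) →
    f (G.π j t) ≤ H j t p) ∧
  (∀ i ∈ G.IT, G.V i ∈ Ω →
    ∀ j ∈ G.Inc i, ∃ k ∈ G.Inc i, k ≠ j ∧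
      ∀ φ : EuclideanSpace ℝ (Fin N) → ℝ, ContinuousOn φ G.Gam →
      ∀ pj pk : ℝ, G.HasEdgeDerivAt φ j (G.vt i j) pj → G.HasEdgeDerivAt φ k (G.vt i k) pk →
      G.a i j * pj + G.a i k * pk = 0 →
      IsLocalMinOn (fun y => u y - φ y) G.Gam (G.V i) →
      f (G.V i) ≤ H j (G.vt i j) pj)

/-- viscosity solution of `H(x, Du) = f(x)` on `Ω ⊆ Γ` -/
def IsSolOn (H : J → ℝ → ℝ → ℝ) (f u : EuclideanSpace ℝ (Fin N) → ℝ)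
    (Ω : Set (EuclideanSpace ℝ (Fin N))) : Prop :=
  G.IsSubSolOn H f u Ω ∧ G.IsSuperSolOn H f u Ω

/-- a piecewise differentiable path in the network from `y` to `x`, described in the
charts: on each subinterval `[t m, t (m+1)]` of `[0, T]` the path runs inside the
closed edge `e m`, with `C¹` coordinate `g m`. -/
structure PWPath (y x : EuclideanSpace ℝ (Fin N)) where
  T : ℝ
  T_pos : 0 < T
  n : ℕ
  t : ℕ → ℝ
  t_zero : t 0 = 0
  t_last : t (n + 1) = T
  t_mono : ∀ m ≤ n, t m < t (m + 1)
  e : ℕ → J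
  g : ℕ → ℝ → ℝ
  g_mem : ∀ m ≤ n, ∀ s ∈ Set.Icc (t m) (t (m + 1)), g m s ∈ Set.Icc 0 (G.l (e m))
  g_smooth : ∀ m ≤ n, ContDiffOn ℝ 1 (g m) (Set.Icc (t m) (t (m + 1)))
  h_start : G.π (e 0) (g 0 0) = y
  h_end : G.π (e n) (g n T) = x
  h_junction : ∀ m < n, G.π (e m) (g m (t (m + 1))) = G.π (e (m + 1)) (g (m + 1) (t (m + 1)))

/-- the path distance `d(y,x)` on the network -/
noncomputable def pdist (y x : EuclideanSpace ℝ (Fin N)) : ℝ :=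
  sInf {c : ℝ | ∃ γ : G.PWPath y x,
    c = ∑ m ∈ Finset.range (γ.n + 1),
      ∫ s in (γ.t m)..(γ.t (m + 1)),
        |derivWithin (γ.g m) (Set.Icc (γ.t m) (γ.t (m + 1))) s|}

/-- `v` is an upper bound for the Legendre transform
`L^j(x,q) = sup_p (p q − H^j(x,p))` -/
def LagrangianLE (H : J → ℝ → ℝ → ℝ) (j : J) (x q v : ℝ) : Prop :=
  ∀ p : ℝ, p * q - H j x p ≤ v

/-- the set of costs `∫ L(γ, γ̇)` of piecewise differentiable paths from `y` to `x`
(encoded via integrable majorants of the Legendre transform along the path, so that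
the possibly `+∞`-valued Lagrangian is handled inside `ℝ`) -/
def ScostSet (H : J → ℝ → ℝ → ℝ) (y x : EuclideanSpace ℝ (Fin N)) : Set ℝ :=
  {c : ℝ | ∃ γ : G.PWPath y x, ∃ ℓ : ℕ → ℝ → ℝ,
    (∀ m ≤ γ.n, IntervalIntegrable (ℓ m) MeasureTheory.volume (γ.t m) (γ.t (m + 1))) ∧
    (∀ m ≤ γ.n, ∀ s ∈ Set.Icc (γ.t m) (γ.t (m + 1)),
      LagrangianLE H (γ.e m) (γ.g m s)
        (derivWithin (γ.g m) (Set.Icc (γ.t m) (γ.t (m + 1))) s) (ℓ m s)) ∧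
    c = ∑ m ∈ Finset.range (γ.n + 1), ∫ s in (γ.t m)..(γ.t (m + 1)), ℓ m s}

/-- the distance `S(y,x)` associated to the Hamiltonian `H` -/
noncomputable def Sdist (H : J → ℝ → ℝ → ℝ) (y x : EuclideanSpace ℝ (Fin N)) : ℝ :=
  sInf (G.ScostSet H y x)

end TopNetwork

/-- The minimum of two viscosity supersolutions of `H(x, Du) = 0` in `Γ`
is a viscosity supersolution of `H(x, Du) = 0` in `Γ`. -/
theorem min_of_supersolutions_is_supersolution
    {N : ℕ} {I J : Type} [Fintype I] [Fintype J] (G : TopNetwork N I J)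
    (H : J → ℝ → ℝ → ℝ) (hH : G.IsEikonalHamiltonian H)
    (u v : EuclideanSpace ℝ (Fin N) → ℝ)
    (hu : G.IsSuperSolOn H (fun _ => (0 : ℝ)) u G.Gam)
    (hv : G.IsSuperSolOn H (fun _ => (0 : ℝ)) v G.Gam) :
    G.IsSuperSolOn H (fun _ => (0 : ℝ)) (fun x => min (u x) (v x)) G.Gam := by
  obtain ⟨hulsc, hue, huv⟩ := hu
  obtain ⟨hvlsc, hve, hvv⟩ := hv
  have key : ∀ (x : EuclideanSpace ℝ (Fin N)) (φ : EuclideanSpace ℝ (Fin N) → ℝ),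
      u x ≤ v x →
      IsLocalMinOn (fun y => min (u y) (v y) - φ y) G.Gam x →
      IsLocalMinOn (fun y => u y - φ y) G.Gam x := by
    intro x φ hle hmin
    refine hmin.mono fun y h1 => ?_
    simp only at h1 ⊢
    have : min (u x) (v x) = u x := min_eq_left hle
    calc u x - φ x = min (u x) (v x) - φ x := by rw [this]
      _ ≤ min (u y) (v y) - φ y := h1
      _ ≤ u y - φ y := by have := min_le_left (u y) (v y); linarith
  have key' : ∀ (x : EuclideanSpace ℝ (Fin N)) (φ : EuclideanSpace ℝ (Fin N) → ℝ),
      v x ≤ u x →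
      IsLocalMinOn (fun y => min (u y) (v y) - φ y) G.Gam x →
      IsLocalMinOn (fun y => v y - φ y) G.Gam x := by
    intro x φ hle hmin
    refine hmin.mono fun y h1 => ?_
    simp only at h1 ⊢
    have : min (u x) (v x) = v x := min_eq_right hle
    calc v x - φ x = min (u x) (v x) - φ x := by rw [this]
      _ ≤ min (u y) (v y) - φ y := h1
      _ ≤ v y - φ y := by have := min_le_right (u y) (v y); linarith
  refine ⟨?_, ?_, ?_⟩
  · intro x hx z hz
    rcases lt_min_iff.1 hz with ⟨hz1, hz2⟩
    filter_upwards [hulsc x hx z hz1, hvlsc x hx z hz2] with y h1 h2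
    exact lt_min h1 h2
  · intro j t ht hmem φ hφ p hp hmin
    rcases le_total (u (G.π j t)) (v (G.π j t)) with h | h
    · exact hue j t ht hmem φ hφ p hp (key _ φ h hmin)
    · exact hve j t ht hmem φ hφ p hp (key' _ φ h hmin)
  · intro i hi hmem j hj
    rcases le_total (u (G.V i)) (v (G.V i)) with h | h
    · obtain ⟨k, hk, hkj, hcond⟩ := huv i hi hmem j hj
      exact ⟨k, hk, hkj, fun φ hφ pj pk hpj hpk ha hmin =>
        hcond φ hφ pj pk hpj hpk ha (key _ φ h hmin)⟩
    · obtain ⟨k, hk, hkj, hcond⟩ := hvv i hi hmem j hj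
      exact ⟨k, hk, hkj, fun φ hφ pj pk hpj hpk ha hmin =>
        hcond φ hφ pj pk hpj hpk ha (key' _ φ h hmin)⟩
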